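/- Let A ∈ B(H) be an essentially unitary contraction such that ‖Aⁿx‖ → 0 and ‖A*ⁿx‖ → 0 as n → ∞ for every x ∈ H. Then for every T ∈ B(H), lim_{n→∞} ‖TAⁿ‖ = ‖T + K(H)‖, the distance in operator norm from T to the ideal of compact operators. -/

import Mathlib

/-!
The lower bound `‖T + K(H)‖ ≤ ‖TAⁿ‖` holds for every `n`: compactness of `1 - AA*` propagates to
`1 - AⁿA*ⁿ`, so `‖T + K(H)‖ ≤ ‖TAⁿA*ⁿ‖ ≤ ‖TAⁿ‖`. Conversely `‖TAⁿ‖ ≤ ‖T + K‖ + ‖KAⁿ‖` for every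
compact `K`, and `‖KAⁿ‖² ≤ ‖A*ⁿ(K*K)‖ → 0`: the contractions `A*ⁿ` tend strongly to `0`, hence
uniformly on the relatively compact image of the unit ball under `K*K`.
-/

open ContinuousLinearMap Filter Topology

section NormedSpace

variable {𝕜 E F G : Type*} [NontriviallyNormedField 𝕜]
  [NormedAddCommGroup E] [NormedSpace 𝕜 E] [NormedAddCommGroup F] [NormedSpace 𝕜 F]
  [NormedAddCommGroup G] [NormedSpace 𝕜 G]

theorem eventually_forall_norm_apply_lt_of_isCompact {ι : Type*} {l : Filter ι}
    {S : ι → F →L[𝕜] G} {M : ℝ} (hM : ∀ i, ‖S i‖ ≤ M)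
    (hS : ∀ y, Tendsto (fun i => S i y) l (𝓝 0)) {K : Set F} (hK : IsCompact K)
    {ε : ℝ} (hε : 0 < ε) : ∀ᶠ i in l, ∀ y ∈ K, ‖S i y‖ < ε := by
  set M' := max M 1
  have hM' : 0 < M' := lt_max_of_lt_right one_pos
  obtain ⟨t, -, ht, hKt⟩ := hK.finite_cover_balls (e := ε / (2 * M')) (by positivity)
  have hnet : ∀ᶠ i in l, ∀ z ∈ t, ‖S i z‖ < ε / 2 :=
    (eventually_all_finite ht).2 fun z _ =>
      NormedAddGroup.tendsto_nhds_zero.1 (hS z) _ (half_pos hε)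
  filter_upwards [hnet] with i hi y hy
  obtain ⟨z, hz, hyz⟩ := Set.mem_iUnion₂.1 (hKt hy)
  have hclose : ‖S i (y - z)‖ ≤ ε / 2 := calc
    ‖S i (y - z)‖ ≤ M' * ‖y - z‖ :=
      (le_opNorm _ _).trans (by gcongr; exact (hM i).trans (le_max_left _ _))
    _ ≤ M' * (ε / (2 * M')) := by gcongr; exact (mem_ball_iff_norm.1 hyz).le
    _ = ε / 2 := by field_simp
  calc ‖S i y‖ = ‖S i (y - z) + S i z‖ := by rw [← map_add, sub_add_cancel]
    _ ≤ ‖S i (y - z)‖ + ‖S i z‖ := norm_add_le _ _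
    _ < ε := by linarith [hi z hz]

theorem tendsto_comp_of_isCompactOperator [NormedAlgebra ℝ 𝕜] {ι : Type*} {l : Filter ι}
    {S : ι → F →L[𝕜] G} {M : ℝ} (hM : ∀ i, ‖S i‖ ≤ M)
    (hS : ∀ y, Tendsto (fun i => S i y) l (𝓝 0)) {C : E →L[𝕜] F} (hC : IsCompactOperator C) :
    Tendsto (fun i => S i ∘L C) l (𝓝 0) := by
  refine NormedAddGroup.tendsto_nhds_zero.2 fun ε hε => ?_
  filter_upwards [eventually_forall_norm_apply_lt_of_isCompact hM hS
    (hC.isCompact_closure_image_closedBall 1) (half_pos hε)] with i hi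
  refine (opNorm_le_of_unit_norm (f := S i ∘L C) (half_pos hε).le
    fun x hx => (hi _ ?_).le).trans_lt (half_lt_self hε)
  exact subset_closure ⟨x, by simp [hx], rfl⟩

theorem isCompactOperator_one_sub_pow_mul_pow {A B : E →L[𝕜] E}
    (h : IsCompactOperator ⇑(1 - A * B)) (n : ℕ) : IsCompactOperator ⇑(1 - A ^ n * B ^ n) := by
  induction n with
  | zero => simpa using isCompactOperator_zero
  | succ n ih =>
    have key : 1 - A ^ (n + 1) * B ^ (n + 1) = A * (1 - A ^ n * B ^ n) * B + (1 - A * B) := by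
      rw [pow_succ' A, pow_succ B]; noncomm_ring
    rw [key, FunLike.coe_add]
    exact ((ih.clm_comp A).comp_clm B).add h

theorem norm_pow_le_one {A : E →L[𝕜] E} (hA : ‖A‖ ≤ 1) (n : ℕ) : ‖A ^ n‖ ≤ 1 := by
  rcases n.eq_zero_or_pos with rfl | hn
  · exact norm_id_le
  · exact (norm_pow_le' A hn).trans (pow_le_one₀ (norm_nonneg A) hA)

/-- The essential norm `‖T + K(E, F)‖`. -/
noncomputable def essNorm (T : E →L[𝕜] F) : ℝ :=
  sInf {r : ℝ | ∃ K : E →L[𝕜] F, IsCompactOperator ⇑K ∧ r = ‖T + K‖}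

theorem essNorm_le_norm_add (T : E →L[𝕜] F) {K : E →L[𝕜] F} (hK : IsCompactOperator K) :
    essNorm T ≤ ‖T + K‖ :=
  csInf_le ⟨0, by rintro _ ⟨K, -, rfl⟩; exact norm_nonneg _⟩ ⟨K, hK, rfl⟩

theorem exists_norm_add_lt_of_essNorm_lt (T : E →L[𝕜] F) {r : ℝ} (hr : essNorm T < r) :
    ∃ K : E →L[𝕜] F, IsCompactOperator K ∧ ‖T + K‖ < r := by
  obtain ⟨_, ⟨K, hK, rfl⟩, hlt⟩ := exists_lt_of_csInf_lt
    (by exact ⟨‖T + 0‖, 0, isCompactOperator_zero, rfl⟩) hr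
  exact ⟨K, hK, hlt⟩

theorem essNorm_le_norm_comp {T : E →L[𝕜] F} {A B : E →L[𝕜] E}
    (hAB : IsCompactOperator ⇑(1 - A * B)) (hB : ‖B‖ ≤ 1) : essNorm T ≤ ‖T ∘L A‖ := calc
  essNorm T ≤ ‖T + -(T ∘L (1 - A * B))‖ := essNorm_le_norm_add T (hAB.clm_comp T).neg
  _ = ‖(T ∘L A) ∘L B‖ := by congr 1; ext x; simp [sub_eq_add_neg]
  _ ≤ ‖T ∘L A‖ * ‖B‖ := opNorm_comp_le _ _
  _ ≤ ‖T ∘L A‖ := mul_le_of_le_one_right (norm_nonneg _) hB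

theorem tendsto_norm_comp_essNorm {ι : Type*} {l : Filter ι} {T : E →L[𝕜] F}
    {B : ι → E →L[𝕜] E} (hB : ∀ i, ‖B i‖ ≤ 1) (hlow : ∀ i, essNorm T ≤ ‖T ∘L B i‖)
    (hK : ∀ K : E →L[𝕜] F, IsCompactOperator K → Tendsto (fun i => K ∘L B i) l (𝓝 0)) :
    Tendsto (fun i => ‖T ∘L B i‖) l (𝓝 (essNorm T)) := by
  refine tendsto_order.2 ⟨fun r hr => .of_forall fun i => hr.trans_le (hlow i), fun r hr => ?_⟩
  obtain ⟨K, hKc, hTK⟩ := exists_norm_add_lt_of_essNorm_lt T hr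
  filter_upwards [NormedAddGroup.tendsto_nhds_zero.1 (hK K hKc) _ (sub_pos.2 hTK)] with i hi
  calc ‖T ∘L B i‖ = ‖(T + K) ∘L B i - K ∘L B i‖ := by rw [add_comp, add_sub_cancel_right]
    _ ≤ ‖(T + K) ∘L B i‖ + ‖K ∘L B i‖ := norm_sub_le _ _
    _ ≤ ‖T + K‖ + ‖K ∘L B i‖ := by
      gcongr; exact (opNorm_comp_le _ _).trans (mul_le_of_le_one_right (norm_nonneg _) (hB i))
    _ < r := by linarith

end NormedSpace

section Hilbert

variable {𝕜 H H' : Type*} [RCLike 𝕜]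
  [NormedAddCommGroup H] [InnerProductSpace 𝕜 H] [CompleteSpace H]
  [NormedAddCommGroup H'] [InnerProductSpace 𝕜 H'] [CompleteSpace H']

theorem sq_norm_comp_le (K : H →L[𝕜] H') (B : H →L[𝕜] H) :
    ‖K ∘L B‖ ^ 2 ≤ ‖adjoint B ∘L (adjoint K ∘L K)‖ * ‖B‖ := calc
  ‖K ∘L B‖ ^ 2 = ‖(adjoint B ∘L (adjoint K ∘L K)) ∘L B‖ := by
    rw [sq, ← norm_adjoint_comp_self, adjoint_comp]; rfl
  _ ≤ ‖adjoint B ∘L (adjoint K ∘L K)‖ * ‖B‖ := opNorm_comp_le _ _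

theorem tendsto_comp_of_isCompactOperator_of_tendsto_adjoint {ι : Type*} {l : Filter ι}
    {B : ι → H →L[𝕜] H} {M : ℝ} (hM : ∀ i, ‖B i‖ ≤ M)
    (hB : ∀ x, Tendsto (fun i => adjoint (B i) x) l (𝓝 0))
    {K : H →L[𝕜] H'} (hK : IsCompactOperator K) :
    Tendsto (fun i => K ∘L B i) l (𝓝 0) := by
  have hKK : Tendsto (fun i => adjoint (B i) ∘L (adjoint K ∘L K)) l (𝓝 0) :=
    tendsto_comp_of_isCompactOperator (by simpa using hM) hB (hK.clm_comp (adjoint K))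
  have hbound : Tendsto (fun i => √(‖adjoint (B i) ∘L (adjoint K ∘L K)‖ * M)) l (𝓝 0) := by
    simpa using (hKK.norm.mul_const M).sqrt
  refine squeeze_zero_norm (fun i => Real.le_sqrt_of_sq_le ?_) hbound
  exact (sq_norm_comp_le K (B i)).trans (by gcongr; exact hM i)

end Hilbert

theorem stmt_10_general {H : Type*} [NormedAddCommGroup H] [InnerProductSpace ℂ H]
    [CompleteSpace H]
    (A T : H →L[ℂ] H)
    (hAc : ‖A‖ ≤ 1)
    (hA2 : IsCompactOperator (⇑((1 : H →L[ℂ] H) - A * adjoint A)))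
    (hAsn : ∀ x : H, Tendsto (fun n : ℕ => ‖((adjoint A) ^ n) x‖) atTop (𝓝 0)) :
    Tendsto (fun n : ℕ => ‖T * A ^ n‖) atTop
      (𝓝 (sInf {r : ℝ | ∃ K : H →L[ℂ] H, IsCompactOperator ⇑K ∧ r = ‖T + K‖})) := by
  show Tendsto (fun n => ‖T ∘L A ^ n‖) atTop (𝓝 (essNorm T))
  have hpow : ∀ n, ‖A ^ n‖ ≤ 1 := norm_pow_le_one hAc
  have hadj_pow : ∀ n, adjoint (A ^ n) = adjoint A ^ n := fun n => by
    rw [← star_eq_adjoint, star_pow, star_eq_adjoint]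
  refine tendsto_norm_comp_essNorm hpow
    (fun n => essNorm_le_norm_comp (isCompactOperator_one_sub_pow_mul_pow hA2 n)
      (norm_pow_le_one (by rwa [LinearIsometryEquiv.norm_map]) n))
    fun K hK => tendsto_comp_of_isCompactOperator_of_tendsto_adjoint hpow (fun x => ?_) hK
  rw [tendsto_zero_iff_norm_tendsto_zero]
  simpa only [hadj_pow] using hAsn x

/-- Let `A` be an essentially unitary contraction on `H` with `‖Aⁿx‖ → 0` and
`‖A*ⁿx‖ → 0` for all `x ∈ H`. Then for every `T ∈ B(H)`,
`lim ‖TAⁿ‖ = ‖T + K(H)‖ = inf {‖T + K‖ : K compact}`. -/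
theorem stmt_10 {H : Type*} [NormedAddCommGroup H] [InnerProductSpace ℂ H]
    [CompleteSpace H] [TopologicalSpace.SeparableSpace H]
    (hinf : ¬ FiniteDimensional ℂ H)
    (A T : H →L[ℂ] H)
    (hAc : ‖A‖ ≤ 1)
    (hA1 : IsCompactOperator (⇑((1 : H →L[ℂ] H) - adjoint A * A)))
    (hA2 : IsCompactOperator (⇑((1 : H →L[ℂ] H) - A * adjoint A)))
    (hAn : ∀ x : H, Tendsto (fun n : ℕ => ‖(A ^ n) x‖) atTop (𝓝 0))
    (hAsn : ∀ x : H, Tendsto (fun n : ℕ => ‖((adjoint A) ^ n) x‖) atTop (𝓝 0)) :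
    Tendsto (fun n : ℕ => ‖T * A ^ n‖) atTop
      (𝓝 (sInf {r : ℝ | ∃ K : H →L[ℂ] H, IsCompactOperator ⇑K ∧ r = ‖T + K‖})) :=
  stmt_10_general A T hAc hA2 hAsn
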